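/- Let A be a finite dimensional algebra over an algebraically closed field K, let W be a wide subcategory of mod(A), let W be an object of W and let g: Y → W be a morphism with Y in gen(W). Then ker(g) belongs to gen(W). -/

import Mathlib

open CategoryTheory

section Defs

variable (K : Type) [Field K] (A : Type) [Ring A] [Algebra K A]

/-- An `A`-module is in `mod(A)` if it is finite dimensional over `K`
(via restriction of scalars along `K → A`). -/
def modCls : Set (ModuleCat A) :=
  {M | @FiniteDimensional K (RestrictScalars K A M) _ _ (RestrictScalars.module K A M)}

variable {A}

/-- A class of modules is replete (closed under isomorphisms). -/
def IsoClosed (C : Set (ModuleCat A)) : Prop :=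
  ∀ ⦃M N : ModuleCat A⦄, (M ≅ N) → M ∈ C → N ∈ C

/-- Closed under quotients. -/
def QuotClosed (C : Set (ModuleCat A)) : Prop :=
  ∀ ⦃M N : ModuleCat A⦄ (f : M ⟶ N), Function.Surjective f → M ∈ C → N ∈ C

/-- Closed under extensions. -/
def ExtClosed (C : Set (ModuleCat A)) : Prop :=
  ∀ ⦃M E N : ModuleCat A⦄ (f : M ⟶ E) (g : E ⟶ N),
    Function.Injective f → Function.Surjective g → Function.Exact f g →
    M ∈ C → N ∈ C → E ∈ C

/-- Closed under kernels. -/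
def KerClosed (C : Set (ModuleCat A)) : Prop :=
  ∀ ⦃M N : ModuleCat A⦄ (f : M ⟶ N), M ∈ C → N ∈ C →
    ModuleCat.of A ↥(LinearMap.ker f.hom) ∈ C

/-- Closed under cokernels. -/
def CokerClosed (C : Set (ModuleCat A)) : Prop :=
  ∀ ⦃M N : ModuleCat A⦄ (f : M ⟶ N), M ∈ C → N ∈ C →
    ModuleCat.of A (N ⧸ LinearMap.range f.hom) ∈ C

variable (A)

/-- A wide subcategory of `mod(A)`: a replete class of finite dimensional modules closed
under kernels, cokernels and extensions. -/
def IsWide (C : Set (ModuleCat A)) : Prop :=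
  C ⊆ modCls K A ∧ IsoClosed C ∧ KerClosed C ∧ CokerClosed C ∧ ExtClosed C

/-- A torsion class in `mod(A)`: a replete class of finite dimensional modules closed
under quotients and extensions. -/
def IsTorsionClass (C : Set (ModuleCat A)) : Prop :=
  C ⊆ modCls K A ∧ IsoClosed C ∧ QuotClosed C ∧ ExtClosed C

variable {A}

/-- `gen C`: all quotients of finite direct sums of objects of `C`. -/
def gen (C : Set (ModuleCat A)) : Set (ModuleCat A) :=
  {X | ∃ (n : ℕ) (M : Fin n → ModuleCat A) (_ : ∀ i, M i ∈ C)
      (f : ModuleCat.of A (∀ i, M i) ⟶ X), Function.Surjective f}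

/-- Modules admitting a `C`-filtration `0 = F 0 ⊆ F 1 ⊆ ⋯ ⊆ F n = X` of length exactly `n`,
with all subquotients `F (i+1) / F i` in `C`. -/
def filtLen (C : Set (ModuleCat A)) (n : ℕ) : Set (ModuleCat A) :=
  {X | ∃ F : Fin (n + 1) → Submodule A X,
      Monotone F ∧ F 0 = ⊥ ∧ F (Fin.last n) = ⊤ ∧
      ∀ i : Fin n, ModuleCat.of A
        (↥(F i.succ) ⧸ Submodule.comap (F i.succ).subtype (F i.castSucc)) ∈ C}

/-- `filt C`: all modules admitting a finite filtration with subquotients in `C`. -/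
def filt (C : Set (ModuleCat A)) : Set (ModuleCat A) :=
  {X | ∃ n, X ∈ filtLen C n}

/-- `C^{⋆n}`: modules with a `C`-filtration of length at most `n`. -/
def filtAtMost (C : Set (ModuleCat A)) (n : ℕ) : Set (ModuleCat A) :=
  {X | ∃ m ≤ n, X ∈ filtLen C m}

/-- `α(T)`: the modules `X ∈ T` such that for every map `g : Y → X` with `Y ∈ T`,
the kernel of `g` is again in `T`. -/
def alpha (T : Set (ModuleCat A)) : Set (ModuleCat A) :=
  {X | X ∈ T ∧ ∀ ⦃Y : ModuleCat A⦄ (g : Y ⟶ X), Y ∈ T →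
      ModuleCat.of A ↥(LinearMap.ker g.hom) ∈ T}

/-- `g : X ⟶ C₁` is a left `C`-approximation of `X`. -/
def IsLeftApprox (C : Set (ModuleCat A)) {X C₁ : ModuleCat A} (g : X ⟶ C₁) : Prop :=
  C₁ ∈ C ∧ ∀ ⦃C' : ModuleCat A⦄ (h : X ⟶ C'), C' ∈ C → ∃ k : C₁ ⟶ C', g ≫ k = h

/-- `g : C₂ ⟶ X` is a right `C`-approximation of `X`. -/
def IsRightApprox (C : Set (ModuleCat A)) {C₂ X : ModuleCat A} (g : C₂ ⟶ X) : Prop :=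
  C₂ ∈ C ∧ ∀ ⦃C' : ModuleCat A⦄ (h : C' ⟶ X), C' ∈ C → ∃ k : C' ⟶ C₂, k ≫ g = h

/-- A left approximation is (left) minimal if every endomorphism compatible with it is an
isomorphism. -/
def IsMinimalLeftApprox (C : Set (ModuleCat A)) {X C₁ : ModuleCat A} (g : X ⟶ C₁) : Prop :=
  IsLeftApprox C g ∧ ∀ h : C₁ ⟶ C₁, g ≫ h = g → IsIso h

variable (A)

/-- A class `C` is functorially finite in `mod(A)` if every finite dimensional module has
both a left and a right `C`-approximation. -/
def FunctFinite (C : Set (ModuleCat A)) : Prop :=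
  ∀ X ∈ modCls K A, (∃ (C₁ : ModuleCat A) (g : X ⟶ C₁), IsLeftApprox C g) ∧
    (∃ (C₂ : ModuleCat A) (g : C₂ ⟶ X), IsRightApprox C g)

variable {A}

/-- `add M`: direct summands of finite direct sums of copies of `M`. -/
def addOf (M : ModuleCat A) : Set (ModuleCat A) :=
  {X | ∃ (n : ℕ) (i : X ⟶ ModuleCat.of A (Fin n → M)) (r : ModuleCat.of A (Fin n → M) ⟶ X),
      i ≫ r = 𝟙 X}

/-- `gen M`: quotients of finite direct sums of copies of `M`. -/
def genOf (M : ModuleCat A) : Set (ModuleCat A) :=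
  {X | ∃ (n : ℕ) (f : ModuleCat.of A (Fin n → M) ⟶ X), Function.Surjective f}

/-- `P` is split projective in `C`: `P ∈ C` and every epimorphism onto `P` from an
object of `C` splits. -/
def SplitProjIn (C : Set (ModuleCat A)) (P : ModuleCat A) : Prop :=
  P ∈ C ∧ ∀ ⦃M : ModuleCat A⦄ (f : M ⟶ P), M ∈ C → Function.Surjective f →
    ∃ s : P ⟶ M, s ≫ f = 𝟙 P

end Defs

/-! Write `Y` as a quotient `f : P ↠ Y` of a finite direct sum `P` of objects of `W`. Being
closed under extensions, `W` contains `P`, hence also the kernel of `f ≫ g : P ⟶ W₀`, and `f`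
maps this kernel onto `ker g`. -/

section Closure

variable {A : Type} [Ring A] {C : Set (ModuleCat A)}

theorem KerClosed.mem_of_subsingleton (hker : KerClosed C) (hiso : IsoClosed C)
    {M : ModuleCat A} (hM : M ∈ C) (Z : ModuleCat A) [Subsingleton Z] : Z ∈ C := by
  have hK : ModuleCat.of A (LinearMap.ker (𝟙 M : M ⟶ M).hom) ∈ C := hker _ hM hM
  have : Subsingleton (LinearMap.ker (𝟙 M : M ⟶ M).hom) := by
    rw [ModuleCat.hom_id, LinearMap.ker_id]
    infer_instance
  exact hiso (LinearEquiv.ofSubsingleton _ _).toModuleIso hK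

theorem ExtClosed.prod_mem (hext : ExtClosed C) {M N : ModuleCat A} (hM : M ∈ C) (hN : N ∈ C) :
    ModuleCat.of A (M × N) ∈ C :=
  hext (ModuleCat.ofHom (LinearMap.inl A M N)) (ModuleCat.ofHom (LinearMap.snd A M N))
    LinearMap.inl_injective LinearMap.snd_surjective Function.Exact.inl_snd hM hN

theorem ExtClosed.pi_mem (hext : ExtClosed C) (hiso : IsoClosed C)
    (hzero : ∀ (Z : ModuleCat A) [Subsingleton Z], Z ∈ C) :
    ∀ {n : ℕ} (M : Fin n → ModuleCat A), (∀ i, M i ∈ C) → ModuleCat.of A (∀ i, M i) ∈ C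
  | 0, _, _ => hzero _
  | _ + 1, M, hM =>
    hiso (Fin.consLinearEquiv A fun i => M i).toModuleIso
      (hext.prod_mem (hM 0) (hext.pi_mem hiso hzero _ fun i => hM i.succ))

theorem mem_gen_of_surjective {M X : ModuleCat A} (hM : M ∈ C) (f : M ⟶ X)
    (hf : Function.Surjective f) : X ∈ gen C :=
  ⟨1, fun _ => M, fun _ => hM, ModuleCat.ofHom (f.hom ∘ₗ LinearMap.proj 0),
    hf.comp (Function.surjective_eval 0)⟩

end Closure

theorem LinearMap.restrict_comap_surjective {R M N : Type*} [Ring R] [AddCommGroup M]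
    [AddCommGroup N] [Module R M] [Module R N] {f : M →ₗ[R] N} (hf : Function.Surjective f)
    (q : Submodule R N) :
    Function.Surjective (f.restrict (p := q.comap f) (q := q) fun _ hx => hx) := by
  rintro ⟨y, hy⟩
  obtain ⟨x, rfl⟩ := hf y
  exact ⟨⟨x, hy⟩, rfl⟩

theorem ker_mem_gen_of_wide_general (K : Type) [Field K] (A : Type) [Ring A] [Algebra K A]
    (W : Set (ModuleCat A)) (hW : IsWide K A W)
    (W₀ Y : ModuleCat A) (hW₀ : W₀ ∈ W) (hY : Y ∈ gen W) (g : Y ⟶ W₀) :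
    ModuleCat.of A ↥(LinearMap.ker g.hom) ∈ gen W := by
  obtain ⟨-, hiso, hker, -, hext⟩ := hW
  obtain ⟨n, M, hM, f, hf⟩ := hY
  have hsum : ModuleCat.of A (∀ i, M i) ∈ W :=
    hext.pi_mem hiso (hker.mem_of_subsingleton hiso hW₀) M hM
  have hfg : ModuleCat.of A (LinearMap.ker (f ≫ g).hom) ∈ W := hker _ hsum hW₀
  -- `ker (f ≫ g)` is definitionally `(ker g).comap f`
  exact mem_gen_of_surjective hfg (ModuleCat.ofHom (f.hom.restrict fun _ hx => hx))
    (LinearMap.restrict_comap_surjective hf _)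

theorem ker_mem_gen_of_wide (K : Type) [Field K] [IsAlgClosed K] (A : Type) [Ring A] [Algebra K A]
    [FiniteDimensional K A]
    (W : Set (ModuleCat A)) (hW : IsWide K A W)
    (W₀ Y : ModuleCat A) (hW₀ : W₀ ∈ W) (hY : Y ∈ gen W) (g : Y ⟶ W₀) :
    ModuleCat.of A ↥(LinearMap.ker g.hom) ∈ gen W :=
  ker_mem_gen_of_wide_general K A W hW W₀ Y hW₀ hY g
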